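/- arXiv:2106.03918 — 2 statements merged into one kernel-verified Lean document; each statement's English description precedes it below -/
import Mathlib

section
/- (Schur–Horn, Schur direction) If A is a Hermitian d×d matrix, then the vector of its diagonal entries is majorized by the vector of its eigenvalues. -/
/-- The vector `v` with entries sorted in decreasing order. -/
noncomputable def sortDesc {d : ℕ} (v : Fin d → ℝ) : Fin d → ℝ :=
  fun i => v (Tuple.sort (fun j => -v j) i)

/-- Sum of the `k` largest entries of `v`. -/
noncomputable def psum {d : ℕ} (v : Fin d → ℝ) (k : ℕ) : ℝ :=
  ∑ i ∈ Finset.univ.filter (fun i : Fin d => (i : ℕ) < k), sortDesc v i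

/-- `v ≺ w` : `v` is majorized by `w`. -/
def Majorizes {d : ℕ} (v w : Fin d → ℝ) : Prop :=
  (∀ k : ℕ, k ≤ d → psum v k ≤ psum w k) ∧ ∑ i, v i = ∑ i, w i

/-! Writing `A = U diag(λ) U*` with `U` unitary, the diagonal of `A` is `P λ` for the doubly
stochastic matrix `P i j = ‖U i j‖²`. The sum of any `k` entries of `P λ` is `∑ j, c j * λ j`
with weights `c j ∈ [0, 1]` summing to `k`, and such a weighted sum never exceeds the sum of the
`k` largest entries of `λ`. -/

open Finset Matrix

theorem Matrix.norm_sq_entries_mem_doublyStochastic {𝕜 n : Type*} [RCLike 𝕜] [Fintype n]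
    [DecidableEq n] {U : Matrix n n 𝕜} (hU : U ∈ unitaryGroup n 𝕜) :
    (of fun i j => ‖U i j‖ ^ 2 : Matrix n n ℝ) ∈ doublyStochastic ℝ n := by
  have hrow (i : n) : ∑ j, ‖U i j‖ ^ 2 = 1 := by
    have h := congrFun₂ ((mem_unitaryGroup_iff).mp hU) i i
    simp only [mul_apply, star_apply, RCLike.star_def, RCLike.mul_conj, one_apply_eq] at h
    exact_mod_cast h
  have hcol (j : n) : ∑ i, ‖U i j‖ ^ 2 = 1 := by
    have h := congrFun₂ ((mem_unitaryGroup_iff').mp hU) j j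
    simp only [mul_apply, star_apply, RCLike.star_def, RCLike.conj_mul, one_apply_eq] at h
    exact_mod_cast h
  exact mem_doublyStochastic_iff_sum.mpr ⟨fun _ _ => sq_nonneg _, hrow, hcol⟩

theorem Matrix.IsHermitian.re_apply_self_eq_mulVec_eigenvalues {𝕜 n : Type*} [RCLike 𝕜]
    [Fintype n] [DecidableEq n] {A : Matrix n n 𝕜} (hA : A.IsHermitian) (i : n) :
    RCLike.re (A i i) =
      ((of fun i j => ‖(hA.eigenvectorUnitary : Matrix n n 𝕜) i j‖ ^ 2) *ᵥ hA.eigenvalues) i := by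
  conv_lhs => rw [hA.spectral_theorem, Unitary.conjStarAlgAut_apply, mul_apply]
  simp only [mul_diagonal, star_apply, RCLike.star_def, Function.comp_apply,
    mulVec, dotProduct, of_apply, map_sum]
  refine sum_congr rfl fun j _ => ?_
  rw [mul_right_comm, RCLike.mul_conj]
  norm_cast

theorem Finset.sum_mul_le_sum_of_threshold {ι : Type*} [Fintype ι] {w c : ι → ℝ}
    {T : Finset ι} {t : ℝ} (hT : ∀ i ∈ T, t ≤ w i) (hTc : ∀ i ∉ T, w i ≤ t)
    (hc0 : ∀ i, 0 ≤ c i) (hc1 : ∀ i, c i ≤ 1) (hc : ∑ i, c i = #T) :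
    ∑ i, c i * w i ≤ ∑ i ∈ T, w i := by
  classical
  let χ : ι → ℝ := fun i => if i ∈ T then 1 else 0
  -- where `c < χ` the entry `w i` is above `t`, and where `c > χ` it is below
  have hterm (i : ι) : (c i - χ i) * (w i - t) ≤ 0 := by
    by_cases hi : i ∈ T
    · simp only [χ, if_pos hi]
      exact mul_nonpos_of_nonpos_of_nonneg (by linarith [hc1 i]) (by linarith [hT i hi])
    · simp only [χ, if_neg hi, sub_zero]
      exact mul_nonpos_of_nonneg_of_nonpos (hc0 i) (by linarith [hTc i hi])
  have hχ : ∑ i, χ i = #T := by simp [χ]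
  have hχw : ∑ i, χ i * w i = ∑ i ∈ T, w i := by simp [χ]
  have hsum : ∑ i, (c i - χ i) * (w i - t)
      = ∑ i, c i * w i - ∑ i, χ i * w i - t * (∑ i, c i - ∑ i, χ i) := by
    simp only [mul_sub, sub_mul, sum_sub_distrib, ← sum_mul]
    ring
  have := sum_nonpos fun i (_ : i ∈ univ) => hterm i
  rw [hsum, hc, hχ, hχw, sub_self, mul_zero, sub_zero] at this
  linarith

theorem sortDesc_antitone {d : ℕ} (v : Fin d → ℝ) : Antitone (sortDesc v) := by
  intro i j hij
  simpa [sortDesc] using Tuple.monotone_sort (fun j => -v j) hij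

noncomputable def topSet {d : ℕ} (v : Fin d → ℝ) (k : ℕ) : Finset (Fin d) :=
  {j | ((Tuple.sort (fun j => -v j)).symm j : ℕ) < k}

theorem psum_eq_sum_topSet {d : ℕ} (v : Fin d → ℝ) (k : ℕ) :
    psum v k = ∑ j ∈ topSet v k, v j :=
  sum_equiv (Tuple.sort (fun j => -v j)) (by simp [topSet]) (fun _ _ => rfl)

theorem card_topSet {d : ℕ} (v : Fin d → ℝ) (k : ℕ) : #(topSet v k) = min d k := by
  rw [← Fin.card_filter_val_lt]
  exact card_equiv (Tuple.sort (fun j => -v j)).symm (by simp [topSet])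

theorem exists_threshold_topSet {d : ℕ} (v : Fin d → ℝ) (k : ℕ) :
    ∃ t, (∀ i ∈ topSet v k, t ≤ v i) ∧ ∀ i ∉ topSet v k, v i ≤ t := by
  set σ := Tuple.sort (fun j => -v j)
  rcases lt_or_ge k d with hk | hk
  · refine ⟨sortDesc v ⟨k, hk⟩, fun i hi => ?_, fun i hi => ?_⟩
    · have hle : σ.symm i ≤ ⟨k, hk⟩ := Fin.le_def.mpr (mem_filter.mp hi).2.le
      simpa [sortDesc, σ] using sortDesc_antitone v hle
    · have hle : ⟨k, hk⟩ ≤ σ.symm i := Fin.le_def.mpr (by simpa [topSet, σ] using hi)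
      simpa [sortDesc, σ] using sortDesc_antitone v hle
  · obtain ⟨t, ht⟩ := (Set.finite_range v).bddBelow
    refine ⟨t, fun i _ => ht ⟨i, rfl⟩, fun i hi => absurd ?_ hi⟩
    simpa [topSet] using (σ.symm i).isLt.trans_le hk

theorem sum_mul_le_psum {d : ℕ} (w c : Fin d → ℝ) {k : ℕ} (hk : k ≤ d)
    (hc0 : ∀ j, 0 ≤ c j) (hc1 : ∀ j, c j ≤ 1) (hc : ∑ j, c j = k) :
    ∑ j, c j * w j ≤ psum w k := by
  obtain ⟨t, hT, hTc⟩ := exists_threshold_topSet w k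
  rw [psum_eq_sum_topSet]
  refine sum_mul_le_sum_of_threshold hT hTc hc0 hc1 ?_
  rw [hc, card_topSet, min_eq_right hk]

theorem majorizes_mulVec_of_mem_doublyStochastic {d : ℕ} {P : Matrix (Fin d) (Fin d) ℝ}
    (hP : P ∈ doublyStochastic ℝ (Fin d)) (w : Fin d → ℝ) : Majorizes (P *ᵥ w) w := by
  refine ⟨fun k hk => ?_, sum_mulVec_of_mem_doublyStochastic hP⟩
  set S := topSet (P *ᵥ w) k
  have hS : ∑ i ∈ S, (P *ᵥ w) i = ∑ j, (∑ i ∈ S, P i j) * w j := by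
    simp only [mulVec, dotProduct, sum_mul]
    exact sum_comm
  rw [psum_eq_sum_topSet, hS]
  refine sum_mul_le_psum w _ hk (fun j => sum_nonneg fun i _ => nonneg_of_mem_doublyStochastic hP)
    (fun j => ?_) ?_
  · calc ∑ i ∈ S, P i j ≤ ∑ i, P i j :=
          sum_le_sum_of_subset_of_nonneg (subset_univ S) fun i _ _ =>
            nonneg_of_mem_doublyStochastic hP
      _ = 1 := sum_col_of_mem_doublyStochastic hP j
  · rw [sum_comm, sum_congr rfl fun i _ => sum_row_of_mem_doublyStochastic hP i, sum_const,
      card_topSet, min_eq_right hk, nsmul_one]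

/-- Schur–Horn (Schur direction): the diagonal of a Hermitian matrix is
majorized by its vector of eigenvalues. -/
theorem schur_horn_schur_direction {d : ℕ} (A : Matrix (Fin d) (Fin d) ℂ)
    (hA : A.IsHermitian) :
    Majorizes (fun i => (A i i).re) hA.eigenvalues := by
  convert majorizes_mulVec_of_mem_doublyStochastic
    (norm_sq_entries_mem_doublyStochastic hA.eigenvectorUnitary.2) hA.eigenvalues
  exact hA.re_apply_self_eq_mulVec_eigenvalues _
end

section
/- Relaxed GOK principle: under the hypotheses of the GOK variational principle, the minimum of Tr(Γ H) over all density operators Γ whose spectrum is majorized by w equals Σ_j w_j E_j, the same value as the minimum over density operators with spectrum exactly w. -/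
open scoped ComplexOrder

/-!
Write `Γ = V diag(γ) V*` and `H = U diag(μ) U*`. Then `Tr(Γ H) = γ ⬝ᵥ Q μ`, where the
matrix `Q = |V* U|²` (entrywise) is doubly stochastic. By Birkhoff's theorem `Q` is a convex
combination of permutation matrices, so it suffices to bound `γ ⬝ᵥ (E ∘ τ)` for every
permutation `τ`. The rearrangement inequality bounds this below by `∑ γ↓ᵢ Eᵢ`, and Abel
summation, with `γ ≺ w` and `E` increasing, gives `∑ γ↓ᵢ Eᵢ ≥ ∑ wᵢ Eᵢ`. Equality holds for
`Γ = U diag(w) U*` with the weights placed on the eigenvectors in the order of `E`.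
-/

open Finset Matrix Unitary

lemma antitone_sortDesc {D : ℕ} (v : Fin D → ℝ) : Antitone (sortDesc v) := fun _ _ hij =>
  neg_le_neg_iff.mp (Tuple.monotone_sort (fun j => -v j) hij)

lemma sortDesc_of_antitone {D : ℕ} {w : Fin D → ℝ} (hw : Antitone w) : sortDesc w = w := by
  have : Tuple.sort (fun j => -w j) = Equiv.refl _ :=
    Tuple.sort_eq_refl_iff_monotone.2 fun _ _ hij => neg_le_neg (hw hij)
  funext i
  simp [sortDesc, this]

lemma sum_sortDesc {D : ℕ} (v : Fin D → ℝ) : ∑ i, sortDesc v i = ∑ i, v i :=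
  Equiv.sum_comp _ v

lemma sortDesc_eq_of_map_univ_eq {D : ℕ} {u v : Fin D → ℝ}
    (h : univ.val.map u = univ.val.map v) : sortDesc u = sortDesc v := by
  rw [Fin.univ_val_map, Fin.univ_val_map, Multiset.coe_eq_coe] at h
  refine List.ofFn_injective (List.Perm.eq_of_sortedGE (antitone_sortDesc u).sortedGE_ofFn
    (antitone_sortDesc v).sortedGE_ofFn ?_)
  exact (Equiv.Perm.ofFn_comp_perm _ u).trans (h.trans (Equiv.Perm.ofFn_comp_perm _ v).symm)

lemma majorizes_of_sortDesc_eq {D : ℕ} {γ w : Fin D → ℝ} (h : sortDesc γ = w) :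
    Majorizes γ w := by
  subst h
  refine ⟨fun k _ => ?_, (sum_sortDesc γ).symm⟩
  rw [psum, psum, sortDesc_of_antitone (antitone_sortDesc γ)]

lemma sum_filter_lt_castSucc {D k : ℕ} (hk : k ≤ D) (f : Fin (D + 1) → ℝ) :
    ∑ i ∈ univ.filter (fun i : Fin D => (i : ℕ) < k), f i.castSucc
      = ∑ i ∈ univ.filter (fun i : Fin (D + 1) => (i : ℕ) < k), f i := by
  simp [Finset.sum_filter, Fin.sum_univ_castSucc, hk]

lemma sum_filter_lt_of_le {D k : ℕ} (hk : D ≤ k) (f : Fin D → ℝ) :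
    ∑ i ∈ univ.filter (fun i : Fin D => (i : ℕ) < k), f i = ∑ i, f i := by
  rw [Finset.filter_true_of_mem fun i _ => i.isLt.trans_le hk]

lemma sum_mul_nonneg_of_prefix_sums_nonneg {D : ℕ} {a f : Fin D → ℝ} (ha : Antitone a)
    (ha₀ : 0 ≤ a) (hf : ∀ k ≤ D, 0 ≤ ∑ i ∈ univ.filter (fun i : Fin D => (i : ℕ) < k), f i) :
    0 ≤ ∑ i, a i * f i := by
  induction D with
  | zero => simp
  | succ D ih =>
    -- Peel off the last weight: `a - a_last` is again antitone and nonnegative.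
    have hsplit : ∑ i, a i * f i = ∑ i : Fin D, (a i.castSucc - a (Fin.last D)) * f i.castSucc
        + a (Fin.last D) * ∑ i, f i := by
      simp only [Fin.sum_univ_castSucc, sub_mul, Finset.sum_sub_distrib, ← Finset.mul_sum]
      ring
    have htotal : 0 ≤ ∑ i, f i := by
      have := hf (D + 1) le_rfl
      rwa [sum_filter_lt_of_le le_rfl] at this
    rw [hsplit]
    have hanti : Antitone fun i : Fin D => a i.castSucc - a (Fin.last D) :=
      fun i j hij => sub_le_sub_right (ha (Fin.castSucc_le_castSucc_iff.2 hij)) _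
    refine add_nonneg (ih hanti (fun i => sub_nonneg.2 (ha (Fin.le_last _))) fun k hk => ?_)
      (mul_nonneg (ha₀ _) htotal)
    rw [sum_filter_lt_castSucc hk]
    exact hf k (hk.trans (Nat.le_succ D))

lemma sum_mul_le_sum_mul_of_prefix_sums_le {D : ℕ} {a f g : Fin D → ℝ} (ha : Monotone a)
    (hfg : ∀ k ≤ D, ∑ i ∈ univ.filter (fun i : Fin D => (i : ℕ) < k), f i
      ≤ ∑ i ∈ univ.filter (fun i : Fin D => (i : ℕ) < k), g i)
    (htot : ∑ i, f i = ∑ i, g i) :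
    ∑ i, a i * g i ≤ ∑ i, a i * f i := by
  -- Shift the weights by an upper bound `c`; the equal totals make the shift harmless.
  obtain ⟨c, hc⟩ := (Set.finite_range a).bddAbove
  have hc : ∀ i, a i ≤ c := fun i => hc ⟨i, rfl⟩
  have key := sum_mul_nonneg_of_prefix_sums_nonneg (a := fun i => c - a i)
    (f := fun i => g i - f i) (fun i j hij => sub_le_sub_left (ha hij) c)
    (fun i => sub_nonneg.2 (hc i))
    fun k hk => by simpa only [Finset.sum_sub_distrib, sub_nonneg] using hfg k hk
  have hexpand : ∑ i, (c - a i) * (g i - f i) = c * (∑ i, g i - ∑ i, f i)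
      - (∑ i, a i * g i - ∑ i, a i * f i) := by
    simp only [mul_sub, sub_mul, Finset.sum_sub_distrib, Finset.mul_sum]
    ring
  rw [hexpand, htot, sub_self, mul_zero, zero_sub, neg_nonneg] at key
  linarith

lemma sum_mul_le_sum_sortDesc_mul_of_majorizes {D : ℕ} {γ w E : Fin D → ℝ}
    (hmaj : Majorizes γ w) (hw : Antitone w) (hE : Monotone E) :
    ∑ i, w i * E i ≤ ∑ i, sortDesc γ i * E i := by
  simp only [mul_comm _ (E _)]
  refine sum_mul_le_sum_mul_of_prefix_sums_le hE (fun k hk => ?_) ?_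
  · have := hmaj.1 k hk
    rwa [psum, psum, sortDesc_of_antitone hw] at this
  · rw [sum_sortDesc, hmaj.2]

lemma sum_sortDesc_mul_le_sum_mul_comp_perm {D : ℕ} (γ : Fin D → ℝ) {E : Fin D → ℝ}
    (hE : Monotone E) (τ : Equiv.Perm (Fin D)) :
    ∑ i, sortDesc γ i * E i ≤ ∑ i, γ i * E (τ i) := by
  set π := Tuple.sort (fun j => -γ j)
  rw [← Equiv.sum_comp π (fun i => γ i * E (τ i))]
  exact ((antitone_sortDesc γ).antivary hE).sum_mul_le_sum_mul_comp_perm (σ := π.trans τ)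

lemma le_dotProduct_mulVec_of_mem_doublyStochastic {n : Type*} [Fintype n] [DecidableEq n]
    {Q : Matrix n n ℝ} (hQ : Q ∈ doublyStochastic ℝ n) {x y : n → ℝ} {c : ℝ}
    (h : ∀ τ : Equiv.Perm n, c ≤ x ⬝ᵥ (y ∘ τ)) : c ≤ x ⬝ᵥ (Q *ᵥ y) := by
  rw [← SetLike.mem_coe, doublyStochastic_eq_convexHull_permMatrix] at hQ
  have hlin : IsLinearMap ℝ fun M : Matrix n n ℝ => x ⬝ᵥ (M *ᵥ y) :=
    ⟨fun M N => by rw [add_mulVec, dotProduct_add],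
      fun r M => by rw [smul_mulVec, dotProduct_smul]⟩
  refine convexHull_min ?_ (convex_halfSpace_ge hlin c) hQ
  rintro _ ⟨τ, rfl⟩
  simpa [permMatrix_mulVec] using h τ

lemma sum_mul_le_dotProduct_mulVec_of_majorizes {D : ℕ} {γ w E : Fin D → ℝ}
    (hmaj : Majorizes γ w) (hw : Antitone w) (hE : Monotone E)
    {Q : Matrix (Fin D) (Fin D) ℝ} (hQ : Q ∈ doublyStochastic ℝ (Fin D))
    (σ : Equiv.Perm (Fin D)) :
    ∑ i, w i * E i ≤ γ ⬝ᵥ (Q *ᵥ (E ∘ σ)) :=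
  le_dotProduct_mulVec_of_mem_doublyStochastic hQ fun τ =>
    (sum_mul_le_sum_sortDesc_mul_of_majorizes hmaj hw hE).trans
      (sum_sortDesc_mul_le_sum_mul_comp_perm γ hE (τ.trans σ))

namespace Matrix

variable {n : Type*} [Fintype n] [DecidableEq n]

lemma map_normSq_mem_doublyStochastic {U : Matrix n n ℂ} (hU : U ∈ unitaryGroup n ℂ) :
    U.map Complex.normSq ∈ doublyStochastic ℝ n := by
  have hrow : ∀ i, (U * star U) i i = ((∑ j, Complex.normSq (U i j) : ℝ) : ℂ) := fun i => by
    simp only [mul_apply, star_apply, Complex.ofReal_sum, Complex.star_def, Complex.mul_conj]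
  have hcol : ∀ j, (star U * U) j j = ((∑ i, Complex.normSq (U i j) : ℝ) : ℂ) := fun j => by
    simp only [mul_apply, star_apply, Complex.ofReal_sum, Complex.star_def,
      Complex.normSq_eq_conj_mul_self]
  refine mem_doublyStochastic_iff_sum.2 ⟨fun i j => Complex.normSq_nonneg _, fun i => ?_,
    fun j => ?_⟩
  · have h1 : (U * star U) i i = 1 := by rw [mem_unitaryGroup_iff.1 hU, one_apply_eq]
    simp only [map_apply]
    exact_mod_cast (hrow i).symm.trans h1
  · have h1 : (star U * U) j j = 1 := by rw [mem_unitaryGroup_iff'.1 hU, one_apply_eq]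
    simp only [map_apply]
    exact_mod_cast (hcol j).symm.trans h1

lemma trace_diagonal_mul_mul_diagonal_mul_star (M : Matrix n n ℂ) (a b : n → ℝ) :
    (diagonal (RCLike.ofReal ∘ a) * M * diagonal (RCLike.ofReal ∘ b) * star M).trace
      = ((a ⬝ᵥ (M.map Complex.normSq *ᵥ b) : ℝ) : ℂ) := by
  simp only [trace, dotProduct, mulVec, Finset.mul_sum, Complex.ofReal_sum]
  refine Finset.sum_congr rfl fun i _ => ?_
  rw [diag_apply, mul_apply]
  refine Finset.sum_congr rfl fun j _ => ?_
  rw [mul_diagonal, diagonal_mul, star_apply, map_apply, Complex.star_def, Complex.ofReal_mul,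
    Complex.ofReal_mul, ← Complex.mul_conj]
  simp only [Function.comp_apply, RCLike.ofReal_eq_complex_ofReal]
  ring

lemma trace_conj_diagonal_mul_conj_diagonal (U V : unitaryGroup n ℂ) (a b : n → ℝ) :
    (conjStarAlgAut ℂ _ V (diagonal (RCLike.ofReal ∘ a))
      * conjStarAlgAut ℂ _ U (diagonal (RCLike.ofReal ∘ b))).trace
      = ((a ⬝ᵥ ((star (V : Matrix n n ℂ) * U).map Complex.normSq *ᵥ b) : ℝ) : ℂ) := by
  rw [← trace_diagonal_mul_mul_diagonal_mul_star, conjStarAlgAut_apply, conjStarAlgAut_apply,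
    star_mul, star_star]
  simp only [← mul_assoc]
  rw [trace_mul_comm _ (V : Matrix n n ℂ)]
  simp only [mul_assoc]

lemma IsHermitian.exists_trace_mul_eq_dotProduct {A B : Matrix n n ℂ} (hA : A.IsHermitian)
    (hB : B.IsHermitian) : ∃ Q ∈ doublyStochastic ℝ n,
      (A * B).trace = ((hA.eigenvalues ⬝ᵥ (Q *ᵥ hB.eigenvalues) : ℝ) : ℂ) := by
  refine ⟨_, map_normSq_mem_doublyStochastic
    (mul_mem (star_mem hA.eigenvectorUnitary.2) hB.eigenvectorUnitary.2), ?_⟩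
  conv_lhs => rw [hA.spectral_theorem, hB.spectral_theorem]
  exact trace_conj_diagonal_mul_conj_diagonal ..

open Polynomial in
lemma IsHermitian.map_eigenvalues_eq_of_eq_conj_diagonal {A : Matrix n n ℂ}
    (hA : A.IsHermitian) (U : unitaryGroup n ℂ) (c : n → ℝ)
    (hAc : A = conjStarAlgAut ℂ _ U (diagonal (RCLike.ofReal ∘ c))) :
    univ.val.map hA.eigenvalues = univ.val.map c := by
  have hchar : A.charpoly = ∏ i, (X - C ((c i : ℝ) : ℂ)) := by
    rw [hAc, conjStarAlgAut_apply, charpoly_mul_comm, ← mul_assoc]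
    simp [charpoly_diagonal]
  have hroots := hA.roots_charpoly_eq_eigenvalues
  rw [hchar, Polynomial.roots_prod _ _ (Finset.prod_ne_zero_iff.2 fun i _ => X_sub_C_ne_zero _)]
    at hroots
  simp only [roots_X_sub_C, Multiset.bind_singleton] at hroots
  refine Multiset.map_injective Complex.ofReal_injective ?_
  rw [Multiset.map_map, Multiset.map_map]
  exact hroots.symm

lemma posSemidef_conj_diagonal (U : unitaryGroup n ℂ) {c : n → ℝ} (hc : 0 ≤ c) :
    (conjStarAlgAut ℂ _ U (diagonal (RCLike.ofReal ∘ c))).PosSemidef := by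
  rw [conjStarAlgAut_apply, star_eq_conjTranspose]
  exact (posSemidef_diagonal_iff.2 fun i => by simpa using hc i).mul_mul_conjTranspose_same _

lemma trace_conjStarAlgAut (U : unitaryGroup n ℂ) (M : Matrix n n ℂ) :
    (conjStarAlgAut ℂ _ U M).trace = M.trace := by
  rw [conjStarAlgAut_apply, trace_mul_cycle, coe_star_mul_self, one_mul]

end Matrix

lemma sum_mul_le_of_trace_mul_eq {D : ℕ} {H Γ : Matrix (Fin D) (Fin D) ℂ} (hH : H.IsHermitian)
    (hΓ : Γ.IsHermitian) {E w : Fin D → ℝ} (hE : Monotone E) (hw : Antitone w)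
    {σ : Equiv.Perm (Fin D)} (hμ : hH.eigenvalues = E ∘ σ) (hmaj : Majorizes hΓ.eigenvalues w)
    {x : ℝ} (hx : (Γ * H).trace = x) :
    ∑ j, w j * E j ≤ x := by
  obtain ⟨Q, hQ, htr⟩ := hΓ.exists_trace_mul_eq_dotProduct hH
  rw [htr, Complex.ofReal_inj, hμ] at hx
  exact hx ▸ sum_mul_le_dotProduct_mulVec_of_majorizes hmaj hw hE hQ σ

lemma exists_density_matrix_sortDesc_eigenvalues_eq {D : ℕ} {H : Matrix (Fin D) (Fin D) ℂ}
    (hH : H.IsHermitian) {E w : Fin D → ℝ} {σ : Equiv.Perm (Fin D)}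
    (hμ : hH.eigenvalues = E ∘ σ) (hw : Antitone w) (hw₀ : ∀ j, 0 ≤ w j)
    (hw₁ : ∑ j, w j = 1) :
    ∃ Γ : Matrix (Fin D) (Fin D) ℂ, ∃ hΓ : Γ.PosSemidef, Γ.trace = 1 ∧
      sortDesc hΓ.1.eigenvalues = w ∧ (Γ * H).trace = ((∑ j, w j * E j : ℝ) : ℂ) := by
  set U := hH.eigenvectorUnitary
  have hΓ := posSemidef_conj_diagonal U (c := w ∘ σ) fun i => hw₀ _
  refine ⟨_, hΓ, ?_, ?_, ?_⟩
  · rw [trace_conjStarAlgAut, trace_diagonal]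
    simp only [Function.comp_apply, RCLike.ofReal_eq_complex_ofReal]
    rw [Equiv.sum_comp σ (fun i => (w i : ℂ))]
    exact_mod_cast hw₁
  · have hmap : univ.val.map hΓ.1.eigenvalues = univ.val.map w := by
      rw [hΓ.1.map_eigenvalues_eq_of_eq_conj_diagonal U _ rfl, ← Multiset.map_map,
        Multiset.map_univ_val_equiv]
    rw [sortDesc_eq_of_map_univ_eq hmap, sortDesc_of_antitone hw]
  · conv_lhs => rw [hH.spectral_theorem]
    rw [trace_conj_diagonal_mul_conj_diagonal, coe_star_mul_self,
      Matrix.map_one _ (map_zero _) (map_one _), one_mulVec, hμ]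
    exact_mod_cast Equiv.sum_comp σ fun j => w j * E j

/-- Relaxed GOK variational principle: the minimum of `Tr(Γ H)` over density
operators whose spectrum is majorized by `w` equals `∑ j, w j * E j`, the same
value as the minimum over density operators with spectrum exactly `w`. -/
theorem relaxed_gok {D : ℕ} (H : Matrix (Fin D) (Fin D) ℂ)
    (hH : H.IsHermitian)
    (E : Fin D → ℝ) (hEmono : Monotone E)
    (hEeig : ∃ σ : Equiv.Perm (Fin D), E = hH.eigenvalues ∘ σ)
    (w : Fin D → ℝ) (hwmono : Antitone w) (hwpos : ∀ j, 0 ≤ w j)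
    (hwsum : ∑ j, w j = 1) :
    IsLeast {x : ℝ | ∃ Γ : Matrix (Fin D) (Fin D) ℂ, ∃ hΓ : Γ.PosSemidef,
        Γ.trace = 1 ∧ Majorizes hΓ.1.eigenvalues w ∧ (Γ * H).trace = (x : ℂ)}
      (∑ j, w j * E j) ∧
    IsLeast {x : ℝ | ∃ Γ : Matrix (Fin D) (Fin D) ℂ, ∃ hΓ : Γ.PosSemidef,
        Γ.trace = 1 ∧ sortDesc hΓ.1.eigenvalues = w ∧ (Γ * H).trace = (x : ℂ)}
      (∑ j, w j * E j) := by
  obtain ⟨σ, hEσ⟩ := hEeig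
  have hμ : hH.eigenvalues = E ∘ σ.symm := by
    funext i
    simp [hEσ]
  obtain ⟨Γ₀, hΓ₀, htr, hspec, hval⟩ :=
    exists_density_matrix_sortDesc_eigenvalues_eq hH hμ hwmono hwpos hwsum
  refine ⟨⟨⟨Γ₀, hΓ₀, htr, majorizes_of_sortDesc_eq hspec, hval⟩, ?_⟩,
    ⟨Γ₀, hΓ₀, htr, hspec, hval⟩, ?_⟩
  · rintro x ⟨Γ, hΓ, -, hmaj, hx⟩
    exact sum_mul_le_of_trace_mul_eq hH hΓ.1 hEmono hwmono hμ hmaj hx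
  · rintro x ⟨Γ, hΓ, -, hspecΓ, hx⟩
    exact sum_mul_le_of_trace_mul_eq hH hΓ.1 hEmono hwmono hμ (majorizes_of_sortDesc_eq hspecΓ) hx
end
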